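/- Let a₁, a₂ ∈ ℝ and suppose the function g : (−1,1) → ℝ, g(x) = a₁·artanh(x/√3) + a₂·artanh(x), is algebraic, i.e. there exists a nonzero polynomial P in two variables with real coefficients such that P(x, g(x)) = 0 for all x ∈ (−1,1). Then a₁ = 0 and a₂ = 0. -/

import Mathlib

/-- The real inverse hyperbolic tangent,
`artanh x = (1/2)·log((1+x)/(1−x))` for `|x| < 1`. -/
noncomputable def artanh (x : ℝ) : ℝ := (1/2) * Real.log ((1 + x) / (1 - x))

open Filter Polynomial Finset Topology

lemma analyticAt_rlog {t : ℝ} (ht : 0 < t) : AnalyticAt ℝ Real.log t := by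
  have h1 : AnalyticAt ℝ (fun y : ℝ => (Complex.log (y : ℂ)).re) t := by
    have hmid : AnalyticAt ℝ (fun y : ℝ => Complex.log (y : ℂ)) t :=
      ((analyticAt_clog (Complex.ofReal_mem_slitPlane.2 ht)).restrictScalars).comp
        (Complex.ofRealCLM.analyticAt t)
    exact (Complex.reCLM.analyticAt _).comp hmid
  have h2 : (fun y : ℝ => (Complex.log (y : ℂ)).re) = Real.log :=
    funext fun y => Complex.log_ofReal_re y
  rwa [h2] at h1

lemma analyticAt_artanh {y : ℝ} (hy : y ∈ Set.Ioo (-1:ℝ) 1) : AnalyticAt ℝ artanh y := by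
  have h1 : (0:ℝ) < 1 + y := by linarith [hy.1]
  have h2 : (0:ℝ) < 1 - y := by linarith [hy.2]
  unfold artanh
  apply analyticAt_const.mul
  apply (analyticAt_rlog (by positivity)).comp
  exact (analyticAt_const.add analyticAt_id).div (analyticAt_const.sub analyticAt_id) h2.ne'

lemma continuousAt_artanh {y : ℝ} (hy : y ∈ Set.Ioo (-1:ℝ) 1) : ContinuousAt artanh y :=
  (analyticAt_artanh hy).continuousAt

lemma artanh_one_sub_exp {s : ℝ} (hs : 0 < s) :
    artanh (1 - Real.exp (-s)) = (1/2) * (Real.log (2 - Real.exp (-s)) + s) := by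
  have he : (0:ℝ) < Real.exp (-s) := Real.exp_pos _
  have he1 : Real.exp (-s) < 1 := Real.exp_lt_one_iff.2 (by linarith)
  unfold artanh
  rw [show 1 + (1 - Real.exp (-s)) = 2 - Real.exp (-s) by ring,
    show 1 - (1 - Real.exp (-s)) = Real.exp (-s) by ring,
    Real.log_div (by nlinarith) he.ne', Real.log_exp]
  ring

lemma artanh_tendsto :
    Tendsto (fun s => artanh (1 - Real.exp (-s)) - (1/2) * s) atTop
      (𝓝 ((1/2) * Real.log 2)) := by
  have h1 : Tendsto (fun s : ℝ => (1/2) * Real.log (2 - Real.exp (-s))) atTop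
      (𝓝 ((1/2) * Real.log 2)) := by
    apply Tendsto.const_mul
    have h2 : Tendsto (fun s : ℝ => 2 - Real.exp (-s)) atTop (𝓝 2) := by
      simpa using tendsto_const_nhds.sub Real.tendsto_exp_neg_atTop_nhds_zero
    exact ((Real.continuousAt_log (by norm_num)).tendsto.comp h2)
  refine h1.congr' ?_
  filter_upwards [eventually_gt_atTop (0:ℝ)] with s hs
  rw [artanh_one_sub_exp hs]; ring

lemma key (N : ℕ) (a : ℕ → Polynomial ℝ) (c : ℝ) (hc : c ≠ 0) (g : ℝ → ℝ) (b₀ : ℝ)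
    (hg : Tendsto (fun s => g (1 - Real.exp (-s)) - c * s) atTop (𝓝 b₀))
    (H : ∀ x ∈ Set.Ioo (-1:ℝ) 1, ∑ j ∈ Finset.range (N+1), (a j).eval x * g x ^ j = 0)
    {j₀ : ℕ} (hj₀N : j₀ ≤ N) (haj₀ : a j₀ ≠ 0) : False := by
  classical
  set S : Finset ℕ := (Finset.range (N+1)).filter (fun j => a j ≠ 0) with hS
  have hSne : S.Nonempty :=
    ⟨j₀, Finset.mem_filter.2 ⟨Finset.mem_range.2 (Nat.lt_succ_of_le hj₀N), haj₀⟩⟩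
  set m : ℕ := S.inf' hSne (fun j => (a j).rootMultiplicity 1) with hm
  have hmonic : ((X - C (1:ℝ))^m).Monic := (monic_X_sub_C 1).pow m
  have hdvd : ∀ j ∈ Finset.range (N+1), (X - C (1:ℝ))^m ∣ a j := by
    intro j hj
    by_cases hzero : a j = 0
    · simp [hzero]
    · have hjS : j ∈ S := Finset.mem_filter.2 ⟨hj, hzero⟩
      have h1 : m ≤ (a j).rootMultiplicity 1 := Finset.inf'_le _ hjS
      exact dvd_trans (pow_dvd_pow _ h1) (pow_rootMultiplicity_dvd _ 1)
  set a' : ℕ → Polynomial ℝ := fun j => a j /ₘ (X - C 1)^m with ha'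
  have hfac : ∀ j ∈ Finset.range (N+1), a j = (X - C 1)^m * a' j := by
    intro j hj
    have h1 := modByMonic_add_div (a j) ((X - C (1:ℝ))^m)
    rwa [(modByMonic_eq_zero_iff_dvd hmonic).2 (hdvd j hj), zero_add, eq_comm] at h1
  obtain ⟨j₁, hj₁S, hj₁m⟩ := Finset.exists_mem_eq_inf' hSne (fun j => (a j).rootMultiplicity 1)
  have hj₁ : (a' j₁).eval 1 ≠ 0 := by
    have hne : a j₁ ≠ 0 := (Finset.mem_filter.1 hj₁S).2
    have : a' j₁ = a j₁ /ₘ (X - C 1) ^ (a j₁).rootMultiplicity 1 := by rw [ha', ← hj₁m]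
    rw [this]
    exact eval_divByMonic_pow_rootMultiplicity_ne_zero 1 hne
  set T : Finset ℕ := (Finset.range (N+1)).filter (fun j => (a' j).eval 1 ≠ 0) with hT
  have hTne : T.Nonempty := ⟨j₁, Finset.mem_filter.2 ⟨(Finset.mem_filter.1 hj₁S).1, hj₁⟩⟩
  set J : ℕ := T.max' hTne with hJ
  have hJT : J ∈ T := T.max'_mem hTne
  have hJN : J ∈ Finset.range (N+1) := (Finset.mem_filter.1 hJT).1
  have hJeval : (a' J).eval 1 ≠ 0 := (Finset.mem_filter.1 hJT).2
  have hgt : ∀ j ∈ Finset.range (N+1), J < j → (a' j).eval 1 = 0 := by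
    intro j hj hlt
    by_contra hcon
    exact absurd (T.le_max' j (Finset.mem_filter.2 ⟨hj, hcon⟩)) (not_le.2 hlt)
  have H' : ∀ x ∈ Set.Ioo (-1:ℝ) 1, ∑ j ∈ Finset.range (N+1), (a' j).eval x * g x ^ j = 0 := by
    intro x hx
    have hx1 : (x - 1) ≠ 0 := sub_ne_zero.2 (ne_of_lt hx.2)
    have h0 := H x hx
    have heq : ∑ j ∈ Finset.range (N+1), (a j).eval x * g x ^ j
        = (x-1)^m * ∑ j ∈ Finset.range (N+1), (a' j).eval x * g x ^ j := by
      rw [Finset.mul_sum]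
      refine Finset.sum_congr rfl (fun j hj => ?_)
      rw [hfac j hj]
      simp only [eval_mul, eval_pow, eval_sub, eval_X, eval_C]
      ring
    rw [heq] at h0
    exact (mul_eq_zero.1 h0).resolve_left (pow_ne_zero _ hx1)
  -- limits
  set xf : ℝ → ℝ := fun s => 1 - Real.exp (-s) with hxf
  have hxmem : ∀ s : ℝ, 0 < s → xf s ∈ Set.Ioo (-1:ℝ) 1 := by
    intro s hs
    have h1 : (0:ℝ) < Real.exp (-s) := Real.exp_pos _
    have h2 : Real.exp (-s) < 1 := Real.exp_lt_one_iff.2 (by linarith)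
    constructor <;> simp [hxf] <;> linarith
  have hxt : Tendsto xf atTop (𝓝 1) := by
    simpa using tendsto_const_nhds.sub Real.tendsto_exp_neg_atTop_nhds_zero
  have hq : Tendsto (fun s => g (xf s) / s) atTop (𝓝 c) := by
    have h1 : Tendsto (fun s => (g (xf s) - c * s)/s) atTop (𝓝 0) := hg.div_atTop tendsto_id
    have h2 : Tendsto (fun s => (g (xf s) - c*s)/s + c) atTop (𝓝 (0 + c)) :=
      h1.add tendsto_const_nhds
    rw [zero_add] at h2
    refine h2.congr' ?_
    filter_upwards [eventually_gt_atTop (0:ℝ)] with s hs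
    field_simp
    ring
  have hEval : ∀ j, Tendsto (fun s => (a' j).eval (xf s)) atTop (𝓝 ((a' j).eval 1)) :=
    fun j => ((a' j).continuous.tendsto 1).comp hxt
  have hterm : ∀ j ∈ Finset.range (N+1),
      Tendsto (fun s => (a' j).eval (xf s) * g (xf s) ^ j / s ^ J) atTop
        (𝓝 (if j = J then (a' J).eval 1 * c ^ J else 0)) := by
    intro j hj
    rcases lt_trichotomy j J with hlt | heq | hgt'
    · rw [if_neg hlt.ne]
      have h0 : Tendsto (fun s => (a' j).eval (xf s) * (g (xf s)/s)^j * (s⁻¹)^(J-j)) atTop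
          (𝓝 ((a' j).eval 1 * c^j * 0)) := by
        refine ((hEval j).mul (hq.pow j)).mul ?_
        have h1 : Tendsto (fun s:ℝ => (s⁻¹)^(J-j)) atTop (𝓝 (0^(J-j))) :=
          tendsto_inv_atTop_zero.pow _
        rwa [zero_pow (Nat.sub_ne_zero_of_lt hlt)] at h1
      rw [mul_zero] at h0
      refine h0.congr' ?_
      filter_upwards [eventually_gt_atTop (0:ℝ)] with s hs
      have hsJ : s^j * s^(J-j) = s^J := by rw [← pow_add]; congr 1; omega
      have h3 : g (xf s)^j / s^j * (s⁻¹)^(J-j) = g (xf s)^j / s^J := by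
        rw [inv_pow, ← div_eq_mul_inv, div_div, hsJ]
      rw [div_pow, mul_assoc, h3, mul_div_assoc]
    · rw [if_pos heq, heq]
      have h0 := (hEval J).mul (hq.pow J)
      refine h0.congr' ?_
      filter_upwards [eventually_gt_atTop (0:ℝ)] with s hs
      rw [div_pow, mul_div_assoc]
    · rw [if_neg hgt'.ne']
      have hzero : (a' j).eval 1 = 0 := hgt j hj hgt'
      set v : Polynomial ℝ := a' j /ₘ (X - C 1) with hv
      have hfacv : a' j = (X - C 1) * v := by
        have hd : (X - C (1:ℝ)) ∣ a' j := dvd_iff_isRoot.2 hzero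
        have h1 := modByMonic_add_div (a' j) (X - C (1:ℝ))
        rwa [(modByMonic_eq_zero_iff_dvd (monic_X_sub_C 1)).2 hd, zero_add, eq_comm] at h1
      have hvt : Tendsto (fun s => v.eval (xf s)) atTop (𝓝 (v.eval 1)) :=
        (v.continuous.tendsto 1).comp hxt
      have h0 : Tendsto (fun s => -(s^(j-J) * Real.exp (-s)) * (v.eval (xf s) * (g (xf s)/s)^j))
          atTop (𝓝 (-(0:ℝ) * (v.eval 1 * c^j))) := by
        exact ((Real.tendsto_pow_mul_exp_neg_atTop_nhds_zero (j-J)).neg).mul (hvt.mul (hq.pow j))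
      rw [neg_zero, zero_mul] at h0
      refine h0.congr' ?_
      filter_upwards [eventually_gt_atTop (0:ℝ)] with s hs
      have hsJ : s^J * s^(j-J) = s^j := by rw [← pow_add]; congr 1; omega
      have heval : (a' j).eval (xf s) = -Real.exp (-s) * v.eval (xf s) := by
        rw [hfacv]; simp [hxf]
      have h3 : g (xf s)^j / s^j * (s^(j-J) * s^J) = g (xf s)^j := by
        rw [mul_comm (s^(j-J)), hsJ, div_mul_cancel₀ _ (pow_ne_zero _ hs.ne')]
      rw [heval, div_pow, eq_comm, div_eq_iff (pow_ne_zero J hs.ne')]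
      linear_combination (Real.exp (-s) * v.eval (xf s)) * h3
  have hsum : Tendsto (fun s => ∑ j ∈ Finset.range (N+1),
      ((a' j).eval (xf s) * g (xf s) ^ j / s ^ J)) atTop
      (𝓝 (∑ j ∈ Finset.range (N+1), if j = J then (a' J).eval 1 * c ^ J else 0)) :=
    tendsto_finset_sum _ hterm
  have hsumval : (∑ j ∈ Finset.range (N+1), if j = J then (a' J).eval 1 * c ^ J else 0)
      = (a' J).eval 1 * c ^ J := by
    rw [Finset.sum_ite_eq' (Finset.range (N+1)) J]
    exact if_pos hJN
  rw [hsumval] at hsum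
  have hzero : Tendsto (fun s => ∑ j ∈ Finset.range (N+1),
      ((a' j).eval (xf s) * g (xf s) ^ j / s ^ J)) atTop (𝓝 0) := by
    refine tendsto_const_nhds.congr' ?_
    filter_upwards [eventually_gt_atTop (0:ℝ)] with s hs
    rw [← Finset.sum_div, H' (xf s) (hxmem s hs), zero_div]
  have : (a' J).eval 1 * c ^ J = 0 := tendsto_nhds_unique hsum hzero
  exact absurd this (mul_ne_zero hJeval (pow_ne_zero _ hc))

noncomputable def toUni (c : MvPolynomial (Fin 1) ℝ) : Polynomial ℝ :=
  Polynomial.map (MvPolynomial.eval (fun _ => (0:ℝ))) (MvPolynomial.finSuccEquiv ℝ 0 c)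

lemma toUni_eval (c : MvPolynomial (Fin 1) ℝ) (x : ℝ) :
    (toUni c).eval x = MvPolynomial.eval ![x] c := by
  have h1 : (![x] : Fin 1 → ℝ) = Fin.cons x (fun _ => (0:ℝ)) := by
    funext i; fin_cases i; rfl
  rw [h1, MvPolynomial.eval_eq_eval_mv_eval']
  rfl

lemma eval0_injective :
    Function.Injective (MvPolynomial.eval (fun _ => (0:ℝ)) : MvPolynomial (Fin 0) ℝ → ℝ) := by
  intro p q hpq
  obtain ⟨r, rfl⟩ := MvPolynomial.C_surjective (Fin 0) p
  obtain ⟨r', rfl⟩ := MvPolynomial.C_surjective (Fin 0) q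
  simp only [MvPolynomial.eval_C] at hpq
  rw [hpq]

lemma toUni_ne_zero {c : MvPolynomial (Fin 1) ℝ} (hc : c ≠ 0) : toUni c ≠ 0 := by
  intro h
  apply hc
  have h1 : MvPolynomial.finSuccEquiv ℝ 0 c = 0 := by
    apply Polynomial.map_injective _ eval0_injective
    simpa [toUni] using h
  exact (MvPolynomial.finSuccEquiv ℝ 0).injective (by simpa using h1)

noncomputable def yPoly (P : MvPolynomial (Fin 2) ℝ) : Polynomial (MvPolynomial (Fin 1) ℝ) :=
  MvPolynomial.finSuccEquiv ℝ 1 (MvPolynomial.rename ![1, 0] P)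

lemma yPoly_ne_zero {P : MvPolynomial (Fin 2) ℝ} (hP : P ≠ 0) : yPoly P ≠ 0 := by
  intro h
  apply hP
  have h1 : MvPolynomial.rename (![1, 0] : Fin 2 → Fin 2) P = 0 :=
    (MvPolynomial.finSuccEquiv ℝ 1).injective (by simpa [yPoly] using h)
  have hinj : Function.Injective (![1, 0] : Fin 2 → Fin 2) := by decide
  exact MvPolynomial.rename_injective _ hinj (by simpa using h1)

lemma eval_yPoly (P : MvPolynomial (Fin 2) ℝ) (x y : ℝ) :
    MvPolynomial.eval ![x, y] P
      = ∑ j ∈ Finset.range ((yPoly P).natDegree + 1),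
          (toUni ((yPoly P).coeff j)).eval x * y ^ j := by
  have h1 : MvPolynomial.eval ![x, y] P
      = MvPolynomial.eval ![y, x] (MvPolynomial.rename ![1, 0] P) := by
    have hcomp : (![y, x] : Fin 2 → ℝ) ∘ (![1, 0] : Fin 2 → Fin 2) = ![x, y] := by
      funext i; fin_cases i <;> rfl
    rw [MvPolynomial.eval_rename, hcomp]
  have h2 : (![y, x] : Fin 2 → ℝ) = Fin.cons y ![x] := by
    funext i; fin_cases i <;> rfl
  rw [h1, h2, MvPolynomial.eval_eq_eval_mv_eval']
  rw [Polynomial.eval_eq_sum_range' (Nat.lt_succ_of_le Polynomial.natDegree_map_le)]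
  · refine Finset.sum_congr rfl (fun j _ => ?_)
    rw [Polynomial.coeff_map, toUni_eval]
    rfl

/-- The key non-algebraicity claim in the proof of Theorem 3 of the paper: if
`g(x) = a₁·artanh(x/√3) + a₂·artanh(x)` is an algebraic function on `(−1,1)`,
then `a₁ = a₂ = 0`. -/
theorem artanh_combination_algebraic_implies_zero (a₁ a₂ : ℝ)
    (h : ∃ P : MvPolynomial (Fin 2) ℝ, P ≠ 0 ∧
      ∀ x ∈ Set.Ioo (-1 : ℝ) 1,
        MvPolynomial.eval
          ![x, a₁ * artanh (x / Real.sqrt 3) + a₂ * artanh x] P = 0) :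
    a₁ = 0 ∧ a₂ = 0 := by
  obtain ⟨P, hP, hPe⟩ := h
  have hyP : yPoly P ≠ 0 := yPoly_ne_zero hP
  set N : ℕ := (yPoly P).natDegree with hN
  have hjx : toUni ((yPoly P).coeff N) ≠ 0 := by
    apply toUni_ne_zero
    rw [← Polynomial.leadingCoeff]
    exact Polynomial.leadingCoeff_ne_zero.mpr hyP
  have hsqrt1 : (1:ℝ) < Real.sqrt 3 := by
    rw [show (1:ℝ) = Real.sqrt 1 from (Real.sqrt_one).symm]
    exact Real.sqrt_lt_sqrt (by norm_num) (by norm_num)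
  have hs3pos : (0:ℝ) < Real.sqrt 3 := by linarith
  have hmem3 : (Real.sqrt 3)⁻¹ ∈ Set.Ioo (-1:ℝ) 1 := by
    constructor
    · have : (0:ℝ) < (Real.sqrt 3)⁻¹ := by positivity
      linarith
    · exact inv_lt_one_of_one_lt₀ hsqrt1
  have H0 : ∀ x ∈ Set.Ioo (-1:ℝ) 1,
      ∑ j ∈ Finset.range (N+1), (toUni ((yPoly P).coeff j)).eval x *
        (a₁ * artanh (x / Real.sqrt 3) + a₂ * artanh x) ^ j = 0 := by
    intro x hx
    rw [hN, ← eval_yPoly]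
    exact hPe x hx
  have ha₂ : a₂ = 0 := by
    by_contra h2
    refine key N (fun j => toUni ((yPoly P).coeff j)) (a₂/2)
      (div_ne_zero h2 two_ne_zero) _
      (a₁ * artanh ((Real.sqrt 3)⁻¹) + a₂ * ((1/2) * Real.log 2)) ?_ H0 le_rfl hjx
    have hc1 : Tendsto (fun s => a₁ * artanh ((1 - Real.exp (-s)) / Real.sqrt 3)) atTop
        (𝓝 (a₁ * artanh ((Real.sqrt 3)⁻¹))) := by
      apply Tendsto.const_mul
      have hx1 : Tendsto (fun s => (1 - Real.exp (-s)) / Real.sqrt 3) atTop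
          (𝓝 ((Real.sqrt 3)⁻¹)) := by
        have h5 : Tendsto (fun s : ℝ => 1 - Real.exp (-s)) atTop (𝓝 1) := by
          simpa using tendsto_const_nhds.sub Real.tendsto_exp_neg_atTop_nhds_zero
        simpa [one_div] using h5.div_const (Real.sqrt 3)
      exact (continuousAt_artanh hmem3).tendsto.comp hx1
    have hc2 : Tendsto (fun s => a₂ * (artanh (1 - Real.exp (-s)) - (1/2) * s)) atTop
        (𝓝 (a₂ * ((1/2) * Real.log 2))) := artanh_tendsto.const_mul a₂
    exact (hc1.add hc2).congr (fun s => by ring)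
  have ha₁ : a₁ = 0 := by
    by_contra h1
    have hFIoo : ∀ x ∈ Set.Ioo (-1:ℝ) 1,
        ∑ j ∈ Finset.range (N+1), (toUni ((yPoly P).coeff j)).eval x *
          (a₁ * artanh (x / Real.sqrt 3)) ^ j = 0 := by
      intro x hx
      have hh := H0 x hx
      simpa [ha₂] using hh
    have hFan : AnalyticOnNhd ℝ (fun x => ∑ j ∈ Finset.range (N+1),
        (toUni ((yPoly P).coeff j)).eval x * (a₁ * artanh (x / Real.sqrt 3)) ^ j)
        (Set.Ioo (-Real.sqrt 3) (Real.sqrt 3)) := by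
      intro x hx
      apply Finset.analyticAt_fun_sum
      intro j _
      apply AnalyticAt.mul
      · exact AnalyticOnNhd.eval_polynomial (𝕜 := ℝ) (toUni ((yPoly P).coeff j)) x trivial
      · refine (analyticAt_const.mul ?_).pow j
        have hdivmem : x / Real.sqrt 3 ∈ Set.Ioo (-1:ℝ) 1 := by
          constructor
          · rw [lt_div_iff₀ hs3pos]; nlinarith [hx.1]
          · rw [div_lt_one hs3pos]; exact hx.2
        have h6 : AnalyticAt ℝ (fun y : ℝ => y / Real.sqrt 3) x :=
          analyticAt_id.div analyticAt_const hs3pos.ne'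
        exact AnalyticAt.comp (f := fun y : ℝ => y / Real.sqrt 3) (x := x) (analyticAt_artanh hdivmem) h6
    have h0mem : (0:ℝ) ∈ Set.Ioo (-Real.sqrt 3) (Real.sqrt 3) := ⟨by linarith, by linarith⟩
    have hobs : (fun x => ∑ j ∈ Finset.range (N+1),
        (toUni ((yPoly P).coeff j)).eval x * (a₁ * artanh (x / Real.sqrt 3)) ^ j)
        =ᶠ[nhds (0:ℝ)] 0 := by
      filter_upwards [isOpen_Ioo.mem_nhds (show (0:ℝ) ∈ Set.Ioo (-1:ℝ) 1 by norm_num)]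
        with x hx
      exact hFIoo x hx
    have hFzero := hFan.eqOn_zero_of_preconnected_of_eventuallyEq_zero
      isPreconnected_Ioo h0mem hobs
    have hBe : ∀ j (x : ℝ),
        ((toUni ((yPoly P).coeff j)).comp (Polynomial.C (Real.sqrt 3) * Polynomial.X)).eval x
          = (toUni ((yPoly P).coeff j)).eval (Real.sqrt 3 * x) := by
      intro j x; simp [Polynomial.eval_comp]
    have hB : (toUni ((yPoly P).coeff N)).comp (Polynomial.C (Real.sqrt 3) * Polynomial.X)
        ≠ 0 := by
      intro h0
      apply hjx
      apply Polynomial.funext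
      intro r
      have h3 := congrArg (Polynomial.eval (r / Real.sqrt 3)) h0
      rw [hBe] at h3
      have harg : Real.sqrt 3 * (r / Real.sqrt 3) = r := by field_simp
      rw [harg] at h3
      simpa using h3
    have HB : ∀ x ∈ Set.Ioo (-1:ℝ) 1, ∑ j ∈ Finset.range (N+1),
        ((toUni ((yPoly P).coeff j)).comp (Polynomial.C (Real.sqrt 3) * Polynomial.X)).eval x
          * (a₁ * artanh x) ^ j = 0 := by
      intro x hx
      have hmem : Real.sqrt 3 * x ∈ Set.Ioo (-Real.sqrt 3) (Real.sqrt 3) := by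
        constructor <;> nlinarith [hx.1, hx.2, hs3pos]
      have h0 := hFzero hmem
      have harg : Real.sqrt 3 * x / Real.sqrt 3 = x := by field_simp
      simp only [Pi.zero_apply, harg] at h0
      calc ∑ j ∈ Finset.range (N+1),
          ((toUni ((yPoly P).coeff j)).comp (Polynomial.C (Real.sqrt 3) * Polynomial.X)).eval x
            * (a₁ * artanh x) ^ j
          = ∑ j ∈ Finset.range (N+1), (toUni ((yPoly P).coeff j)).eval (Real.sqrt 3 * x)
            * (a₁ * artanh x) ^ j := by
            refine Finset.sum_congr rfl (fun j _ => ?_); rw [hBe]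
        _ = 0 := h0
    refine key N (fun j => (toUni ((yPoly P).coeff j)).comp
      (Polynomial.C (Real.sqrt 3) * Polynomial.X)) (a₁/2)
      (div_ne_zero h1 two_ne_zero) _ (a₁ * ((1/2) * Real.log 2)) ?_ HB le_rfl hB
    exact (artanh_tendsto.const_mul a₁).congr (fun s => by ring)
  exact ⟨ha₁, ha₂⟩
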